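/- Every finite simple graph G on n ≥ 2 vertices satisfies lbox(G) ≤ 24 · n / log₂ n. -/

import Mathlib

open Classical

/-- A finite simple graph is an interval graph if each vertex can be assigned a
closed real interval so that distinct vertices are adjacent iff their intervals
intersect. -/
def IsIntervalGraph {V : Type} (I : SimpleGraph V) : Prop :=
  ∃ l r : V → ℝ, ∀ u v : V, u ≠ v →
    (I.Adj u v ↔ (Set.Icc (l u) (r u) ∩ Set.Icc (l v) (r v)).Nonempty)

/-- A vertex is universal if it is adjacent to every other vertex. -/
def IsUniversal {V : Type} (I : SimpleGraph V) (v : V) : Prop :=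
  ∀ u : V, u ≠ v → I.Adj v u

/-- `G` has a local box representation where every vertex is non-universal in at
most `t` of the interval graphs. -/
def LocalBoxRep {V : Type} (G : SimpleGraph V) (t : ℕ) : Prop :=
  ∃ (k : ℕ) (I : Fin k → SimpleGraph V),
    (∀ i, IsIntervalGraph (I i)) ∧
    (∀ u v : V, u ≠ v → (G.Adj u v ↔ ∀ i, (I i).Adj u v)) ∧
    (∀ v : V, {i : Fin k | ¬ IsUniversal (I i) v}.ncard ≤ t)

/-- Local boxicity of a graph. -/
noncomputable def lbox {V : Type} (G : SimpleGraph V) : ℕ :=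
  sInf {t : ℕ | LocalBoxRep G t}

/-- Iterated base-2 logarithm: the number of times `logb 2` must be applied
before the result becomes at most 1. -/
noncomputable def logStar (x : ℝ) : ℕ :=
  sInf {n : ℕ | (Real.logb 2)^[n] x ≤ 1}

/-- A graph is claw-free if it has no induced `K_{1,3}`. -/
def ClawFree {V : Type} (G : SimpleGraph V) : Prop :=
  ∀ v a b c : V, a ≠ b → a ≠ c → b ≠ c →
    ¬ (G.Adj v a ∧ G.Adj v b ∧ G.Adj v c ∧ ¬ G.Adj a b ∧ ¬ G.Adj a c ∧ ¬ G.Adj b c)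

/-- Comparability graph of a poset. -/
def compGraph (α : Type) [PartialOrder α] : SimpleGraph α where
  Adj x y := x ≠ y ∧ (x ≤ y ∨ y ≤ x)
  symm := by
    refine ⟨fun x y h => ?_⟩
    exact ⟨h.1.symm, h.2.symm⟩
  loopless := by
    refine ⟨fun x h => ?_⟩
    exact h.1 rfl

/-- A partial linear extension of a poset, given as a duplicate-free list
(ordered by position) which extends the partial order on its elements. -/
def IsPLE {α : Type} [PartialOrder α] [DecidableEq α] (L : List α) : Prop :=
  L.Nodup ∧ ∀ x ∈ L, ∀ y ∈ L, x ≤ y → L.idxOf x ≤ L.idxOf y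

/-- `x` appears below `y` in the list `L`. -/
def Below {α : Type} [DecidableEq α] (L : List α) (x y : α) : Prop :=
  x ∈ L ∧ y ∈ L ∧ L.idxOf x < L.idxOf y

/-- A local realizer of a poset: a family of ple's such that every strict
relation is witnessed, and every incomparable pair is reversed twice. -/
def IsLocalRealizer {α : Type} [PartialOrder α] [DecidableEq α] {k : ℕ}
    (L : Fin k → List α) : Prop :=
  (∀ i, IsPLE (L i)) ∧
  (∀ x y : α, x < y → ∃ i, Below (L i) x y) ∧
  (∀ x y : α, ¬ x ≤ y → ¬ y ≤ x →
    (∃ i, Below (L i) x y) ∧ (∃ i, Below (L i) y x))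

/-- Local dimension of a poset: the least `t` such that some local realizer has
every element in at most `t` ple's. -/
noncomputable def ldim (α : Type) [PartialOrder α] [DecidableEq α] : ℕ :=
  sInf {t : ℕ | ∃ (k : ℕ) (L : Fin k → List α), IsLocalRealizer L ∧
    ∀ x : α, {i : Fin k | x ∈ L i}.ncard ≤ t}

/-- Product dimension of a graph. -/
noncomputable def prodDim {V : Type} (G : SimpleGraph V) : ℕ :=
  sInf {k : ℕ | 0 < k ∧ ∃ f : V → Fin k → ℕ,
    ∀ u v : V, u ≠ v → (G.Adj u v ↔ ∀ i, f u i ≠ f v i)}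

/-- A poset has height at most 2: every chain has at most 2 elements. -/
def HeightAtMostTwo (α : Type) [Preorder α] : Prop :=
  ∀ x y z : α, x ≤ y → y ≤ z → x = y ∨ y = z

/-!
Split the `n` vertices into about `n / s` blocks of at most `s` vertices, with `2 ^ s ≈ √n`.
A non-edge `uv` inside a block is cut by the "star" graph of `u`: complete except between `u` and
its non-neighbours in its block. A non-edge between blocks is cut by the graph indexed by a block
`c` and a set `A ⊆ c`: complete except between `A` and the vertices outside `c` whose
non-neighbourhood in `c` is exactly `A`. Each such graph is a complete graph minus a biclique
between disjoint sets, hence an interval graph. A vertex `x` is non-universal in at most `s` star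
graphs, in at most `2 ^ s` graphs `(c, A)` with `x ∈ A` (then `c` is the block of `x`), and, as a
crosser, in at most one graph per block `c` (then `A` is its non-neighbourhood in `c`). Hence
`lbox G ≤ s + 2 ^ s + n / s + 1`, which is `O(n / log n)`.
-/

open Finset

section IntervalGraphs

variable {V : Type}

def coBiclique (A B : Set V) : SimpleGraph V :=
  (SimpleGraph.fromRel fun u v => u ∈ A ∧ v ∈ B)ᶜ

lemma coBiclique_adj {A B : Set V} {u v : V} :
    (coBiclique A B).Adj u v ↔
      u ≠ v ∧ ¬ (u ∈ A ∧ v ∈ B) ∧ ¬ (u ∈ B ∧ v ∈ A) := by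
  simp only [coBiclique, SimpleGraph.compl_adj, SimpleGraph.fromRel_adj]
  tauto

lemma isIntervalGraph_coBiclique {A B : Set V} (hAB : Disjoint A B) :
    IsIntervalGraph (coBiclique A B) := by
  refine ⟨fun u => if u ∈ A then 1 else 0, fun u => if u ∈ B then 0 else 1,
    fun u v huv => ?_⟩
  have hu : u ∈ A → u ∉ B := fun h => Set.disjoint_left.mp hAB h
  have hv : v ∈ A → v ∉ B := fun h => Set.disjoint_left.mp hAB h
  rw [coBiclique_adj, Set.Icc_inter_Icc, Set.nonempty_Icc]
  by_cases huA : u ∈ A <;> by_cases hvA : v ∈ A <;> by_cases huB : u ∈ B <;>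
    by_cases hvB : v ∈ B <;> simp_all

lemma not_isUniversal_coBiclique {A B : Set V} {x : V}
    (h : ¬ IsUniversal (coBiclique A B) x) :
    (x ∈ A ∧ B.Nonempty) ∨ (x ∈ B ∧ A.Nonempty) := by
  simp only [IsUniversal, coBiclique_adj, not_forall] at h
  obtain ⟨u, hux, hxu⟩ := h
  by_cases h : x ∈ A ∧ u ∈ B
  · exact .inl ⟨h.1, u, h.2⟩
  · exact .inr ⟨by tauto, u, by tauto⟩

end IntervalGraphs

lemma ncard_setOf_sum_le {α β : Type} (p : α ⊕ β → Prop) :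
    {j | p j}.ncard ≤ {a | p (.inl a)}.ncard + {b | p (.inr b)}.ncard := by
  have hsplit : {j | p j} = Sum.inl '' {a | p (.inl a)} ∪ Sum.inr '' {b | p (.inr b)} := by
    ext (a | b) <;> simp
  rw [hsplit]
  refine (Set.ncard_union_le _ _).trans_eq ?_
  rw [Set.ncard_image_of_injective _ Sum.inl_injective,
    Set.ncard_image_of_injective _ Sum.inr_injective]

lemma localBoxRep_of_fintype {V ι : Type} [Fintype ι] {G : SimpleGraph V} {t : ℕ}
    (I : ι → SimpleGraph V) (hI : ∀ i, IsIntervalGraph (I i))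
    (hG : ∀ u v, u ≠ v → (G.Adj u v ↔ ∀ i, (I i).Adj u v))
    (ht : ∀ v, {i | ¬ IsUniversal (I i) v}.ncard ≤ t) : LocalBoxRep G t := by
  let e := (Fintype.equivFin ι).symm
  refine ⟨Fintype.card ι, I ∘ e, fun i => hI (e i), fun u v huv => ?_, fun v => ?_⟩
  · exact (hG u v huv).trans e.forall_congr_right.symm
  · exact (Set.ncard_preimage_of_injective_subset_range e.injective
      (by simp [e.surjective.range_eq])).trans_le (ht v)

section Blocks

variable {V ι : Type} (G : SimpleGraph V) (g : V → ι)

def blockNonNbrs (w : V) : Set V := {u | g u = g w ∧ u ≠ w ∧ ¬ G.Adj w u}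

def starGraph (w : V) : SimpleGraph V := coBiclique {w} (blockNonNbrs G g w)

variable {G g}

lemma isIntervalGraph_starGraph (w : V) : IsIntervalGraph (starGraph G g w) :=
  isIntervalGraph_coBiclique <| Set.disjoint_singleton_left.mpr fun hw => hw.2.1 rfl

lemma starGraph_adj_of_adj {u v : V} (h : G.Adj u v) (w : V) :
    (starGraph G g w).Adj u v := by
  rw [starGraph, coBiclique_adj]
  refine ⟨h.ne, ?_, ?_⟩
  · rintro ⟨rfl, hv⟩
    exact hv.2.2 h
  · rintro ⟨hu, rfl⟩
    exact hu.2.2 h.symm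

lemma not_starGraph_adj {u v : V} (huv : u ≠ v) (h : ¬ G.Adj u v) (hg : g u = g v) :
    ¬ (starGraph G g u).Adj u v := by
  rw [starGraph, coBiclique_adj]
  exact fun hadj => hadj.2.1 ⟨rfl, hg.symm, huv.symm, h⟩

variable [Fintype V] (G g)

noncomputable def nonNbrsIn (c : ι) (u : V) : Finset V := {w | g w = c ∧ ¬ G.Adj u w}

def crossers (c : ι) (A : Finset V) : Set V := {u | g u ≠ c ∧ nonNbrsIn G g c u = A}

def crossGraph (p : ι × Finset V) : SimpleGraph V := coBiclique ↑p.2 (crossers G g p.1 p.2)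

variable {G g}

lemma mem_nonNbrsIn {c : ι} {u w : V} : w ∈ nonNbrsIn G g c u ↔ g w = c ∧ ¬ G.Adj u w := by
  simp [nonNbrsIn]

lemma isIntervalGraph_crossGraph (p : ι × Finset V) : IsIntervalGraph (crossGraph G g p) :=
  isIntervalGraph_coBiclique <| Set.disjoint_left.mpr fun _ huA hu =>
    hu.1 (mem_nonNbrsIn.mp (hu.2 ▸ huA)).1

lemma crossGraph_adj_of_adj {u v : V} (h : G.Adj u v) (p : ι × Finset V) :
    (crossGraph G g p).Adj u v := by
  rw [crossGraph, coBiclique_adj]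
  refine ⟨h.ne, ?_, ?_⟩
  · rintro ⟨hu, hv⟩
    exact (mem_nonNbrsIn.mp (hv.2 ▸ hu : u ∈ nonNbrsIn G g p.1 v)).2 h.symm
  · rintro ⟨hu, hv⟩
    exact (mem_nonNbrsIn.mp (hu.2 ▸ hv : v ∈ nonNbrsIn G g p.1 u)).2 h

lemma not_crossGraph_adj {u v : V} (h : ¬ G.Adj u v) (hg : g u ≠ g v) :
    ¬ (crossGraph G g (g v, nonNbrsIn G g (g v) u)).Adj u v := by
  rw [crossGraph, coBiclique_adj]
  exact fun hadj => hadj.2.2 ⟨⟨hg, rfl⟩, mem_nonNbrsIn.mpr ⟨rfl, h⟩⟩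

variable {s : ℕ} (hs : ∀ c, {v | g v = c}.ncard ≤ s)
include hs

lemma ncard_not_isUniversal_starGraph_le (x : V) :
    {w | ¬ IsUniversal (starGraph G g w) x}.ncard ≤ s := by
  refine (Set.ncard_le_ncard fun w hw => ?_).trans (hs (g x))
  rcases not_isUniversal_coBiclique hw with ⟨rfl, -⟩ | ⟨hx, -⟩
  exacts [rfl, hx.1.symm]

lemma ncard_not_isUniversal_crossGraph_le [Fintype ι] (x : V) :
    {p | ¬ IsUniversal (crossGraph G g p) x}.ncard ≤ 2 ^ s + Fintype.card ι := by
  let block : Finset V := {v | g v = g x}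
  let own : Finset (ι × Finset V) := block.powerset.image (g x, ·)
  let crossing : Finset (ι × Finset V) := univ.image fun c => (c, nonNbrsIn G g c x)
  have hsub : {p | ¬ IsUniversal (crossGraph G g p) x} ⊆ ↑(own ∪ crossing) := by
    rintro ⟨c, A⟩ hp
    rcases not_isUniversal_coBiclique hp with
      ⟨hxA, u, -, hA : nonNbrsIn G g c u = A⟩ | ⟨⟨-, hA : nonNbrsIn G g c x = A⟩, -⟩
    · have hAc : ∀ w ∈ A, g w = c := fun w hw => (mem_nonNbrsIn.mp (hA ▸ hw)).1
      obtain rfl : g x = c := hAc x hxA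
      refine mem_union_left _ (mem_image.mpr ⟨A, mem_powerset.mpr fun w hw => ?_, rfl⟩)
      simpa [block] using hAc w hw
    · subst hA
      exact mem_union_right _ (mem_image_of_mem _ (mem_univ c))
  calc {p | ¬ IsUniversal (crossGraph G g p) x}.ncard
      ≤ #(own ∪ crossing) := (Set.ncard_le_ncard hsub).trans_eq (Set.ncard_coe_finset _)
    _ ≤ #own + #crossing := card_union_le _ _
    _ ≤ 2 ^ s + Fintype.card ι := by
      gcongr
      · refine card_image_le.trans ((card_powerset _).trans_le ?_)
        refine Nat.pow_le_pow_right two_pos ?_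
        simpa [block, ← Set.ncard_coe_finset] using hs (g x)
      · exact card_image_le

end Blocks

lemma localBoxRep_of_blocks {V ι : Type} [Fintype V] [Fintype ι] {G : SimpleGraph V}
    {g : V → ι} {s : ℕ} (hs : ∀ c, {v | g v = c}.ncard ≤ s) :
    LocalBoxRep G (s + (2 ^ s + Fintype.card ι)) := by
  refine localBoxRep_of_fintype (Sum.elim (starGraph G g) (crossGraph G g))
    (Sum.forall.mpr ⟨isIntervalGraph_starGraph, isIntervalGraph_crossGraph⟩)
    (fun u v huv => ⟨fun h => Sum.forall.mpr
      ⟨starGraph_adj_of_adj h, crossGraph_adj_of_adj h⟩, fun h => ?_⟩)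
    (fun x => (ncard_setOf_sum_le _).trans (add_le_add
      (ncard_not_isUniversal_starGraph_le hs x) (ncard_not_isUniversal_crossGraph_le hs x)))
  by_contra hna
  by_cases hg : g u = g v
  · exact not_starGraph_adj huv hna hg (h (.inl u))
  · exact not_crossGraph_adj hna hg (h (.inr _))

lemma exists_blocks {V : Type} [Fintype V] {m s : ℕ} (h : Fintype.card V ≤ m * s) :
    ∃ g : V → Fin m, ∀ c, {v | g v = c}.ncard ≤ s := by
  let f : V → Fin m × Fin s := finProdFinEquiv.symm ∘ Fin.castLE h ∘ Fintype.equivFin V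
  have hf : f.Injective := finProdFinEquiv.symm.injective.comp
    ((Fin.castLE_injective h).comp (Fintype.equivFin V).injective)
  refine ⟨fun v => (f v).1, fun c => ?_⟩
  calc {v | (f v).1 = c}.ncard ≤ (Set.univ : Set (Fin s)).ncard :=
        Set.ncard_le_ncard_of_injOn (fun v => (f v).2) (fun _ _ => trivial)
          fun v hv w hw hvw => hf (Prod.ext (hv.trans hw.symm) hvw)
    _ = s := by simp

lemma lbox_le_of_card_le_mul {V : Type} [Fintype V] (G : SimpleGraph V) {m s : ℕ}
    (h : Fintype.card V ≤ m * s) : lbox G ≤ s + (2 ^ s + m) := by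
  obtain ⟨g, hg⟩ := exists_blocks h
  have hrep := localBoxRep_of_blocks (G := G) hg
  rw [Fintype.card_fin] at hrep
  exact Nat.sInf_le hrep

lemma lbox_mul_log_succ_le {V : Type} [Fintype V] (G : SimpleGraph V) {n : ℕ}
    (hn : Fintype.card V = n) (hn_pos : 0 < n) : lbox G * (Nat.log 2 n + 1) ≤ 10 * n := by
  obtain ⟨t, ht⟩ : ∃ t, t = Nat.log 2 n / 2 := ⟨_, rfl⟩
  obtain ⟨q, hq⟩ : ∃ q, q = n / (t + 1) := ⟨_, rfl⟩
  have hdiv : (t + 1) * q ≤ n := hq ▸ Nat.mul_div_le n (t + 1)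
  have hlbox : lbox G ≤ (t + 1) + (2 ^ (t + 1) + (q + 1)) := by
    refine lbox_le_of_card_le_mul G ?_
    rw [hn, hq, mul_comm]
    exact (Nat.lt_mul_div_succ n t.succ_pos).le
  have hlog : Nat.log 2 n + 1 ≤ 2 * (t + 1) := by omega
  have ht_le : t + 1 ≤ 2 ^ t := Nat.lt_two_pow_self
  have hsq : 2 ^ t * 2 ^ t ≤ n := by
    rw [← pow_add]
    exact (Nat.pow_le_pow_right two_pos (by omega)).trans (Nat.pow_log_le_self 2 hn_pos.ne')
  calc lbox G * (Nat.log 2 n + 1) ≤ ((t + 1) + (2 ^ (t + 1) + (q + 1))) * (2 * (t + 1)) :=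
        Nat.mul_le_mul hlbox hlog
    _ ≤ 10 * n := by
      rw [pow_succ]
      generalize 2 ^ t = u at ht_le hsq ⊢
      linarith [Nat.mul_le_mul ht_le ht_le, Nat.mul_le_mul_left u ht_le, Nat.le_mul_self u]

/-- every graph on n ≥ 2 vertices has lbox(G) ≤ 24·n/log₂ n. -/
theorem stmt9 {V : Type} [Fintype V] (G : SimpleGraph V) (n : ℕ)
    (hn : Fintype.card V = n) (h2 : 2 ≤ n) :
    (lbox G : ℝ) ≤ 24 * (n : ℝ) / Real.logb 2 (n : ℝ) := by
  have hlog_pos : 0 < Real.logb 2 n := Real.logb_pos one_lt_two (by exact_mod_cast h2)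
  have hlog_lt : Real.logb 2 n < Nat.log 2 n + 1 := by
    have hfloor := Real.natFloor_logb_natCast 2 n
    rw [Nat.cast_ofNat] at hfloor
    exact hfloor ▸ Nat.lt_floor_add_one _
  rw [le_div_iff₀ hlog_pos]
  calc (lbox G : ℝ) * Real.logb 2 n ≤ lbox G * (Nat.log 2 n + 1) := by gcongr
    _ ≤ 10 * n := by exact_mod_cast lbox_mul_log_succ_le G hn (by omega)
    _ ≤ 24 * n := by gcongr; norm_num
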